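/- arXiv:2007.08123 — 7 statements merged into one kernel-verified Lean document; each statement's English description precedes it below -/
import Mathlib

section
/- Let S be a finite set of points in the plane ℝ², and let (a,b) ∈ ℝ² satisfy a ≤ p₁ and b ≤ p₂ for every point p = (p₁,p₂) ∈ S. If p ∈ S is the unique minimizer of the query value over S, i.e. (p₁ − a)·(p₂ − b) < (q₁ − a)·(q₂ − b) for every q ∈ S with q ≠ p, then p is a vertex of the convex hull of S; that is, p does not belong to the convex hull of S \ {p}. -/
lemma sep_aux (T : Set (ℝ × ℝ)) (α β : ℝ) (p : ℝ × ℝ)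
    (hT : ∀ q ∈ T, α * p.1 + β * p.2 < α * q.1 + β * q.2) :
    p ∉ convexHull ℝ T := by
  intro h
  have hlin : IsLinearMap ℝ (fun x : ℝ × ℝ => α * x.1 + β * x.2) := by
    constructor <;> intros <;>
      simp [Prod.fst_add, Prod.snd_add, Prod.smul_fst, Prod.smul_snd, smul_eq_mul] <;> ring
  have hconv : Convex ℝ {x : ℝ × ℝ | α * p.1 + β * p.2 < α * x.1 + β * x.2} := by
    exact convex_halfSpace_gt hlin (α * p.1 + β * p.2)
  have hsub : T ⊆ {x : ℝ × ℝ | α * p.1 + β * p.2 < α * x.1 + β * x.2} := hT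
  have hmem := convexHull_min hsub hconv h
  simp only [Set.mem_setOf_eq] at hmem
  exact lt_irrefl _ hmem

/-- If `p ∈ S` is the unique minimizer of the query value `(x − a)·(y − b)` over a finite
set `S` of planar points, where `(a, b)` is below and to the left of all points of `S`,
then `p` is a vertex of the convex hull of `S`: it is not in the convex hull of the
remaining points. -/
theorem unique_query_minimizer_is_hull_vertex
    (S : Finset (ℝ × ℝ)) (a b : ℝ)
    (hab : ∀ q ∈ S, a ≤ q.1 ∧ b ≤ q.2)
    (p : ℝ × ℝ) (hp : p ∈ S)
    (hmin : ∀ q ∈ S, q ≠ p → (p.1 - a) * (p.2 - b) < (q.1 - a) * (q.2 - b)) :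
    p ∉ convexHull ℝ ((S : Set (ℝ × ℝ)) \ {p}) := by
  obtain ⟨ha, hb⟩ := hab p hp
  rcases eq_or_lt_of_le ha with h1 | h1
  · apply sep_aux _ 1 0
    rintro q ⟨hqS, hqp⟩
    have hqS' : q ∈ S := hqS
    have hmq := hmin q hqS' (by simpa using hqp)
    obtain ⟨hqa, hqb⟩ := hab q hqS'
    nlinarith
  · rcases eq_or_lt_of_le hb with h2 | h2
    · apply sep_aux _ 0 1
      rintro q ⟨hqS, hqp⟩
      have hqS' : q ∈ S := hqS
      have hmq := hmin q hqS' (by simpa using hqp)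
      obtain ⟨hqa, hqb⟩ := hab q hqS'
      nlinarith
    · apply sep_aux _ (p.2 - b) (p.1 - a)
      rintro q ⟨hqS, hqp⟩
      have hqS' : q ∈ S := hqS
      have hmq := hmin q hqS' (by simpa using hqp)
      obtain ⟨hqa, hqb⟩ := hab q hqS'
      have key : (p.1 - a) * (p.2 - b) * ((p.1 - a) * (p.2 - b)) <
          (p.1 - a) * (p.2 - b) * ((q.1 - a) * (q.2 - b)) :=
        mul_lt_mul_of_pos_left hmq (mul_pos (sub_pos.2 h1) (sub_pos.2 h2))
      nlinarith [sq_nonneg ((p.2 - b) * (q.1 - a) - (p.1 - a) * (q.2 - b)),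
        mul_pos (sub_pos.2 h1) (sub_pos.2 h2), mul_nonneg (sub_nonneg.2 hqa) (sub_nonneg.2 hqb),
        mul_nonneg (sub_pos.2 h2).le (sub_nonneg.2 hqa),
        mul_nonneg (sub_pos.2 h1).le (sub_nonneg.2 hqb), key]
end

section
/- Let S be a finite set of points in the plane ℝ², and let (a,b) ∈ ℝ² satisfy a ≤ p₁ and b ≤ p₂ for every point p = (p₁,p₂) ∈ S. If p ∈ S minimizes the query value over S, i.e. (p₁ − a)·(p₂ − b) ≤ (q₁ − a)·(q₂ − b) for every q ∈ S, then p does not lie in the topological interior of the convex hull of S. -/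
lemma quad_convex (a b c : ℝ) (hc : 0 ≤ c) :
    Convex ℝ {x : ℝ × ℝ | a ≤ x.1 ∧ b ≤ x.2 ∧ c ≤ (x.1 - a) * (x.2 - b)} := by
  rintro x ⟨hx1, hx2, hx3⟩ y ⟨hy1, hy2, hy3⟩ u v hu hv huv
  have hv' : v = 1 - u := by linarith
  subst hv'
  have h1 : 0 ≤ x.1 - a := by linarith
  have h2 : 0 ≤ x.2 - b := by linarith
  have h3 : 0 ≤ y.1 - a := by linarith
  have h4 : 0 ≤ y.2 - b := by linarith
  have hu1 : (0:ℝ) ≤ 1 - u := by linarith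
  refine ⟨?_, ?_, ?_⟩
  · simp only [Prod.fst_add, Prod.smul_fst, smul_eq_mul]; nlinarith [mul_le_mul_of_nonneg_left hx1 hu, mul_le_mul_of_nonneg_left hy1 hu1]
  · simp only [Prod.snd_add, Prod.smul_snd, smul_eq_mul]; nlinarith [mul_le_mul_of_nonneg_left hx2 hu, mul_le_mul_of_nonneg_left hy2 hu1]
  · simp only [Prod.fst_add, Prod.snd_add, Prod.smul_fst, Prod.smul_snd, smul_eq_mul]
    have hA : 0 ≤ (x.1 - a) * (y.2 - b) := mul_nonneg h1 h4
    have hB : 0 ≤ (y.1 - a) * (x.2 - b) := mul_nonneg h3 h2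
    have hAB : c ^ 2 ≤ ((x.1 - a) * (y.2 - b)) * ((y.1 - a) * (x.2 - b)) := by
      nlinarith [mul_le_mul hx3 hy3 hc (mul_nonneg h1 h2)]
    have key : 2 * c ≤ (x.1 - a) * (y.2 - b) + (y.1 - a) * (x.2 - b) := by
      nlinarith [sq_nonneg ((x.1 - a) * (y.2 - b) - (y.1 - a) * (x.2 - b)), hAB, hA, hB, hc]
    have t1 : u ^ 2 * c ≤ u ^ 2 * ((x.1 - a) * (x.2 - b)) :=
      mul_le_mul_of_nonneg_left hx3 (sq_nonneg u)
    have t2 : (1 - u) ^ 2 * c ≤ (1 - u) ^ 2 * ((y.1 - a) * (y.2 - b)) :=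
      mul_le_mul_of_nonneg_left hy3 (sq_nonneg (1 - u))
    have t3 : u * (1 - u) * (2 * c) ≤ u * (1 - u) * ((x.1 - a) * (y.2 - b) + (y.1 - a) * (x.2 - b)) :=
      mul_le_mul_of_nonneg_left key (mul_nonneg hu hu1)
    nlinarith [t1, t2, t3]

/-- If `p ∈ S` minimizes the query value `(x − a)·(y − b)` over a finite set `S` of planar
points, where `(a, b)` is below and to the left of all points of `S`, then `p` does not lie
in the topological interior of the convex hull of `S`. -/
theorem query_minimizer_not_in_interior_hull
    (S : Finset (ℝ × ℝ)) (a b : ℝ)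
    (hab : ∀ q ∈ S, a ≤ q.1 ∧ b ≤ q.2)
    (p : ℝ × ℝ) (hp : p ∈ S)
    (hmin : ∀ q ∈ S, (p.1 - a) * (p.2 - b) ≤ (q.1 - a) * (q.2 - b)) :
    p ∉ interior (convexHull ℝ (S : Set (ℝ × ℝ))) := by
  intro hint
  set c : ℝ := (p.1 - a) * (p.2 - b) with hcdef
  have hpa := hab p hp
  have hc0 : 0 ≤ c := mul_nonneg (by linarith [hpa.1]) (by linarith [hpa.2])
  have hsub : (S : Set (ℝ × ℝ)) ⊆ {x : ℝ × ℝ | a ≤ x.1 ∧ b ≤ x.2 ∧ c ≤ (x.1 - a) * (x.2 - b)} :=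
    fun q hq => ⟨(hab q hq).1, (hab q hq).2, hmin q hq⟩
  have hhull : convexHull ℝ (S : Set (ℝ × ℝ)) ⊆
      {x : ℝ × ℝ | a ≤ x.1 ∧ b ≤ x.2 ∧ c ≤ (x.1 - a) * (x.2 - b)} :=
    convexHull_min hsub (quad_convex a b c hc0)
  rw [mem_interior_iff_mem_nhds, Metric.mem_nhds_iff] at hint
  obtain ⟨ε, hε, hball⟩ := hint
  rcases eq_or_lt_of_le hc0 with hczero | hcpos
  · have hzz : p.1 - a = 0 ∨ p.2 - b = 0 := mul_eq_zero.mp hczero.symm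
    rcases hzz with h | h
    · have hx : ((p.1 - ε/2, p.2) : ℝ × ℝ) ∈ Metric.ball p ε := by
        simp only [Metric.mem_ball, Prod.dist_eq, max_lt_iff, Real.dist_eq]
        constructor
        · rw [show p.1 - ε/2 - p.1 = -(ε/2) by ring, abs_neg, abs_of_pos (by linarith)]
          linarith
        · simpa using hε
      have h2 := (hhull (hball hx)).1
      simp only at h2
      linarith
    · have hx : ((p.1, p.2 - ε/2) : ℝ × ℝ) ∈ Metric.ball p ε := by
        simp only [Metric.mem_ball, Prod.dist_eq, max_lt_iff, Real.dist_eq]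
        constructor
        · simpa using hε
        · rw [show p.2 - ε/2 - p.2 = -(ε/2) by ring, abs_neg, abs_of_pos (by linarith)]
          linarith
      have h2 := (hhull (hball hx)).2.1
      simp only at h2
      linarith
  · have hcpos' : 0 < (p.1 - a) * (p.2 - b) := hcdef ▸ hcpos
    have hpa1 : a < p.1 := by nlinarith [hpa.1, hpa.2]
    have hpa2 : b < p.2 := by nlinarith [hpa.1, hpa.2]
    set d : ℝ := ‖p - (a, b)‖ with hd
    have hd0 : 0 < d := by
      rw [hd, norm_pos_iff]
      intro hcontra
      have h1 : p.1 - a = 0 := by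
        have := congrArg Prod.fst hcontra; simpa using this
      linarith
    set t : ℝ := min (ε / (2 * d)) (1/2) with ht
    have ht0 : 0 < t := lt_min (by positivity) (by norm_num)
    have ht1 : t < 1 := lt_of_le_of_lt (min_le_right _ _) (by norm_num)
    have hx : p + t • ((a, b) - p) ∈ Metric.ball p ε := by
      rw [Metric.mem_ball, dist_eq_norm]
      have heq : p + t • ((a, b) - p) - p = (-t) • (p - (a, b)) := by module
      rw [heq, norm_smul]
      simp only [norm_neg, Real.norm_eq_abs, abs_neg, abs_of_pos ht0]
      calc t * d ≤ (ε / (2 * d)) * d :=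
            mul_le_mul_of_nonneg_right (min_le_left _ _) hd0.le
        _ = ε / 2 := by field_simp
        _ < ε := by linarith
    have hmem := (hhull (hball hx)).2.2
    have he1 : (p + t • ((a, b) - p)).1 = p.1 + t * (a - p.1) := by simp
    have he2 : (p + t • ((a, b) - p)).2 = p.2 + t * (b - p.2) := by simp
    rw [he1, he2] at hmem
    have hident : (p.1 + t * (a - p.1) - a) * (p.2 + t * (b - p.2) - b) = (1 - t)^2 * c := by
      rw [hcdef]; ring
    rw [hident] at hmem
    nlinarith [hmem, mul_pos (mul_pos ht0 (show (0:ℝ) < 2 - t by linarith)) hcpos]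
end

section
/- Let p = (p₁,p₂) and q = (q₁,q₂) be two distinct points of ℝ². Then the bisector of p and q with respect to the query value, namely the set { (a,b) ∈ ℝ² : (p₁ − a)·(p₂ − b) = (q₁ − a)·(q₂ − b) }, is exactly the line through the other two corners of the bounding box of p and q; that is, it equals the affine span over ℝ of the two (distinct) points (p₁, q₂) and (q₁, p₂). -/
/-- The bisector of two distinct sites `p` and `q` with respect to the query value
`(x − a)·(y − b)` is the line through the other two corners `(p₁, q₂)` and `(q₁, p₂)`
of the bounding box of `p` and `q`. -/
theorem bisector_eq_line_through_box_corners
    (p q : ℝ × ℝ) (hpq : p ≠ q) :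
    {x : ℝ × ℝ | (p.1 - x.1) * (p.2 - x.2) = (q.1 - x.1) * (q.2 - x.2)}
      = (affineSpan ℝ {(p.1, q.2), (q.1, p.2)} : Set (ℝ × ℝ)) := by
  ext ⟨a, b⟩
  have key : ((a, b) : ℝ × ℝ) ∈ affineSpan ℝ {((p.1, q.2) : ℝ × ℝ), (q.1, p.2)} ↔
      ∃ r : ℝ, r • (((q.1, p.2) : ℝ × ℝ) -ᵥ (p.1, q.2)) = ((a, b) : ℝ × ℝ) -ᵥ (p.1, q.2) := by
    rw [← vadd_left_mem_affineSpan_pair (k := ℝ) (v := ((a, b) : ℝ × ℝ) -ᵥ (p.1, q.2))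
      (p₁ := ((p.1, q.2) : ℝ × ℝ)) (p₂ := (q.1, p.2))]
    simp
  simp only [Set.mem_setOf_eq, SetLike.mem_coe, key, vsub_eq_sub, Prod.ext_iff,
    Prod.mk_sub_mk, Prod.smul_mk, Prod.fst_sub, Prod.snd_sub, smul_eq_mul]
  constructor
  · intro h
    by_cases h1 : p.1 = q.1
    · have h2 : p.2 ≠ q.2 := fun h2 => hpq (Prod.ext h1 h2)
      have ha : a = p.1 := by
        have : (p.2 - q.2) * a = (p.2 - q.2) * p.1 := by rw [h1] at h ⊢; nlinarith
        exact mul_left_cancel₀ (sub_ne_zero.2 h2) this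
      refine ⟨(b - q.2) / (p.2 - q.2), ?_, ?_⟩
      · rw [ha, h1]; ring
      · rw [div_mul_eq_mul_div, mul_div_assoc, div_self (sub_ne_zero.2 h2), mul_one]
    · have hne : q.1 - p.1 ≠ 0 := sub_ne_zero.2 (Ne.symm h1)
      refine ⟨(a - p.1) / (q.1 - p.1), ?_, ?_⟩
      · field_simp
      · field_simp
        nlinarith [h]
  · rintro ⟨r, ha, hb⟩
    have ha' : a = p.1 + r * (q.1 - p.1) := by linarith
    have hb' : b = q.2 + r * (p.2 - q.2) := by linarith
    subst ha'; subst hb'; ring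
end

section
/- Let S be a finite set of points in ℝ² that is an antichain under componentwise order (for all r, s ∈ S, if r₁ ≤ s₁ and r₂ ≤ s₂ then r = s). Let p = (p₁,p₂) and q = (q₁,q₂) be points of S with p₁ < q₁ that are consecutive in x-order, i.e. no r ∈ S satisfies p₁ < r₁ < q₁. Then (necessarily q₂ < p₂, and) for every query point (a,b) with p₁ < a < q₁ and q₂ < b < p₂, and for every r = (r₁,r₂) ∈ S, the query value of r is at most the larger of the query values of p and q: (r₁ − a)·(r₂ − b) ≤ max( (p₁ − a)·(p₂ − b), (q₁ − a)·(q₂ − b) ). -/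
/-- For an antichain `S` under componentwise order and two points `p, q ∈ S` that are
consecutive in `x`-order (with `p₁ < q₁`), we have `q₂ < p₂`, and for every query point
`(a, b)` inside the open bounding box of `p` and `q`, every point of `S` has query value
at most the larger of the query values of `p` and `q`. -/
theorem consecutive_maximal_points_dominate_in_box
    (S : Finset (ℝ × ℝ))
    (hanti : ∀ r ∈ S, ∀ s ∈ S, r.1 ≤ s.1 → r.2 ≤ s.2 → r = s)
    (p q : ℝ × ℝ) (hp : p ∈ S) (hq : q ∈ S) (hx : p.1 < q.1)
    (hconsec : ∀ r ∈ S, ¬(p.1 < r.1 ∧ r.1 < q.1)) :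
    q.2 < p.2 ∧
      ∀ a b : ℝ, p.1 < a → a < q.1 → q.2 < b → b < p.2 →
        ∀ r ∈ S, (r.1 - a) * (r.2 - b) ≤
          max ((p.1 - a) * (p.2 - b)) ((q.1 - a) * (q.2 - b)) := by
  have hyy : q.2 < p.2 := by
    by_contra h
    push_neg at h
    have := hanti p hp q hq hx.le h
    rw [this] at hx
    exact lt_irrefl _ hx
  refine ⟨hyy, ?_⟩
  intro a b h1 h2 h3 h4 r hr
  have hr' := hconsec r hr
  rcases le_or_gt r.1 p.1 with h | h
  · by_cases hrp : r = p
    · subst hrp; exact le_max_left _ _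
    · have h2' : p.2 < r.2 := lt_of_not_ge fun hle => hrp (hanti r hr p hp h hle)
      refine le_trans ?_ (le_max_left _ _)
      nlinarith
  · have hq1 : q.1 ≤ r.1 := by
      by_contra hc
      push_neg at hc
      exact hr' ⟨h, hc⟩
    by_cases hrq : r = q
    · subst hrq; exact le_max_right _ _
    · have h2' : r.2 < q.2 := lt_of_not_ge fun hle => hrq ((hanti q hq r hr hq1 hle).symm)
      refine le_trans ?_ (le_max_right _ _)
      nlinarith
end

section
/- Let S be a finite set of points in ℝ² and let p = (p₁,p₂) ∈ S. Then the cell of p in the maximization diagram of query values, namely the set { (a,b) ∈ ℝ² : for every q = (q₁,q₂) ∈ S, (q₁ − a)·(q₂ − b) ≤ (p₁ − a)·(p₂ − b) }, is a convex subset of ℝ². -/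
/-- The cell of a site `p` in the maximization diagram of query values
`(x − a)·(y − b)` over a finite planar set `S` is a convex subset of the plane. -/
theorem maximization_diagram_cell_convex
    (S : Finset (ℝ × ℝ)) (p : ℝ × ℝ) (hp : p ∈ S) :
    Convex ℝ {x : ℝ × ℝ |
      ∀ q ∈ S, (q.1 - x.1) * (q.2 - x.2) ≤ (p.1 - x.1) * (p.2 - x.2)} := by
  intro x hx y hy a b ha hb hab q hq
  have h1 := hx q hq
  have h2 := hy q hq
  simp only [Set.mem_setOf_eq, Prod.fst_add, Prod.snd_add, Prod.smul_fst, Prod.smul_snd,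
    smul_eq_mul]
  have hb1 : b = 1 - a := by linarith
  subst hb1
  nlinarith [mul_le_mul_of_nonneg_left h1 ha, mul_le_mul_of_nonneg_left h2 hb]
end

section
/- Let c and r be positive natural numbers, let col : ℝ → Fin c and row : ℝ → Fin r be monotone (order-preserving) functions, and let S ⊆ ℝ² be a finite set. Then the set of grid cells containing minimal points of S, namely { (col(p₁), row(p₂)) : p = (p₁,p₂) a minimal point of S }, has cardinality at most c + r − 1. -/
/-- For monotone grid functions `col : ℝ → Fin c` and `row : ℝ → Fin r` and a finite set
`S ⊆ ℝ²`, the set of grid cells containing minimal points of `S` has at most `c + r − 1`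
elements. -/
theorem minimal_points_grid_cells_card_le
    (c r : ℕ) (hc : 0 < c) (hr : 0 < r)
    (col : ℝ → Fin c) (row : ℝ → Fin r)
    (hcol : Monotone col) (hrow : Monotone row)
    (S : Finset (ℝ × ℝ)) :
    Set.ncard {cell : Fin c × Fin r |
        ∃ p ∈ S, (∀ q ∈ S, q.1 ≤ p.1 → q.2 ≤ p.2 → q = p) ∧
          cell = (col p.1, row p.2)} ≤ c + r - 1 := by
  classical
  set T : Set (Fin c × Fin r) := {cell : Fin c × Fin r |
        ∃ p ∈ S, (∀ q ∈ S, q.1 ≤ p.1 → q.2 ≤ p.2 → q = p) ∧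
          cell = (col p.1, row p.2)} with hT
  set f : Fin c × Fin r → ℕ := fun x => (x.1 : ℕ) + (r - 1 - (x.2 : ℕ)) with hf
  have hinj : Set.InjOn f T := by
    rintro x ⟨p, hpS, hpmin, rfl⟩ y ⟨q, hqS, hqmin, rfl⟩ hxy
    have hcmp : ((col p.1 : ℕ) ≤ col q.1 ∧ (row q.2 : ℕ) ≤ row p.2) ∨
        ((col q.1 : ℕ) ≤ col p.1 ∧ (row p.2 : ℕ) ≤ row q.2) := by
      rcases le_total p.1 q.1 with h | h
      · rcases le_total q.2 p.2 with h2 | h2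
        · exact Or.inl ⟨hcol h, hrow h2⟩
        · have hpq := hqmin p hpS h h2
          rw [hpq]
          exact Or.inl ⟨le_refl _, le_refl _⟩
      · rcases le_total p.2 q.2 with h2 | h2
        · exact Or.inr ⟨hcol h, hrow h2⟩
        · have hqp := hpmin q hqS h h2
          rw [hqp]
          exact Or.inl ⟨le_refl _, le_refl _⟩
    have hxc := (col p.1).isLt
    have hyc := (col q.1).isLt
    have hxr := (row p.2).isLt
    have hyr := (row q.2).isLt
    simp only [hf] at hxy
    have e1 : (col p.1 : ℕ) = col q.1 ∧ (row p.2 : ℕ) = row q.2 := by omega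
    exact Prod.ext (Fin.ext e1.1) (Fin.ext e1.2)
  have hsub : f '' T ⊆ (Finset.range (c + r - 1) : Finset ℕ) := by
    rintro _ ⟨x, ⟨p, hpS, hpmin, rfl⟩, rfl⟩
    have h1 := (col p.1).isLt
    have h2 := (row p.2).isLt
    simp only [Finset.coe_range, Set.mem_Iio, hf]
    omega
  calc T.ncard = (f '' T).ncard := (Set.ncard_image_of_injOn hinj).symm
    _ ≤ ((Finset.range (c + r - 1) : Finset ℕ) : Set ℕ).ncard :=
        Set.ncard_le_ncard hsub (Set.toFinite _)
    _ = c + r - 1 := by rw [Set.ncard_coe_finset, Finset.card_range]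
end

section
/- The function x ↦ √(x · log x) (the square root of x times the natural logarithm of x) is concave on the interval [1,∞). -/
open Real Set Filter

noncomputable def sqrtMulLogAux : ℝ → ℝ := fun x => Real.sqrt (x * Real.log x)

noncomputable def sqrtMulLogAux' : ℝ → ℝ :=
  fun x => (Real.log x + 1) / (2 * Real.sqrt (x * Real.log x))

lemma sqrtMulLogAux_u_pos {x : ℝ} (hx : 1 < x) : 0 < x * Real.log x :=
  mul_pos (by linarith) (Real.log_pos hx)

lemma sqrtMulLogAux_hasDerivAt {x : ℝ} (hx : 1 < x) :
    HasDerivAt sqrtMulLogAux (sqrtMulLogAux' x) x := by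
  have hu := sqrtMulLogAux_u_pos hx
  have h1 : HasDerivAt (fun y : ℝ => y * Real.log y) (Real.log x + 1) x :=
    Real.hasDerivAt_mul_log (by positivity)
  have h2 : HasDerivAt Real.sqrt (1 / (2 * Real.sqrt (x * Real.log x))) (x * Real.log x) :=
    Real.hasDerivAt_sqrt hu.ne'
  have h3 : HasDerivAt (fun y => Real.sqrt (y * Real.log y))
      (1 / (2 * Real.sqrt (x * Real.log x)) * (Real.log x + 1)) x := h2.comp x h1
  refine h3.congr_deriv ?_
  simp only [sqrtMulLogAux']
  ring

lemma sqrtMulLogAux'_hasDerivAt {x : ℝ} (hx : 1 < x) :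
    HasDerivAt sqrtMulLogAux'
      ((1 / x * (2 * Real.sqrt (x * Real.log x)) -
        (Real.log x + 1) * (2 * sqrtMulLogAux' x)) /
        (2 * Real.sqrt (x * Real.log x)) ^ 2) x := by
  have hu := sqrtMulLogAux_u_pos hx
  have hs : 0 < Real.sqrt (x * Real.log x) := Real.sqrt_pos.mpr hu
  have hn : HasDerivAt (fun y : ℝ => Real.log y + 1) (1 / x) x := by
    simpa using (Real.hasDerivAt_log (by positivity)).add_const 1
  have hd : HasDerivAt (fun y : ℝ => 2 * Real.sqrt (y * Real.log y))
      (2 * sqrtMulLogAux' x) x := (sqrtMulLogAux_hasDerivAt hx).const_mul 2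
  exact hn.div hd (by positivity)

lemma sqrtMulLogAux_deriv2_nonpos {x : ℝ} (hx : 1 < x) :
    (1 / x * (2 * Real.sqrt (x * Real.log x)) -
        (Real.log x + 1) * (2 * sqrtMulLogAux' x)) /
        (2 * Real.sqrt (x * Real.log x)) ^ 2 ≤ 0 := by
  have hu := sqrtMulLogAux_u_pos hx
  have hs : 0 < Real.sqrt (x * Real.log x) := Real.sqrt_pos.mpr hu
  have hsq : Real.sqrt (x * Real.log x) ^ 2 = x * Real.log x := Real.sq_sqrt hu.le
  have hL : 0 < Real.log x := Real.log_pos hx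
  have hx0 : (0:ℝ) < x := by linarith
  apply div_nonpos_of_nonpos_of_nonneg _ (by positivity)
  have hφ : sqrtMulLogAux' x = (Real.log x + 1) / (2 * Real.sqrt (x * Real.log x)) := rfl
  rw [hφ]
  have h2 : 2 * ((Real.log x + 1) / (2 * Real.sqrt (x * Real.log x)))
      = (Real.log x + 1) / Real.sqrt (x * Real.log x) := by
    field_simp
  have hsq' : Real.sqrt (x * Real.log x) * Real.sqrt (x * Real.log x) = x * Real.log x :=
    Real.mul_self_sqrt hu.le
  rw [h2, sub_nonpos, one_div, inv_mul_eq_div, mul_div_assoc']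
  rw [div_le_div_iff₀ hx0 hs]
  nlinarith [hsq', mul_pos hx0 (by positivity : (0:ℝ) < Real.log x ^ 2 + 1)]

/-- The function `x ↦ √(x · log x)` is concave on the interval `[1, ∞)`. -/
theorem sqrt_mul_log_concaveOn :
    ConcaveOn ℝ (Set.Ici (1 : ℝ)) (fun x => Real.sqrt (x * Real.log x)) := by
  have hF : (fun x => Real.sqrt (x * Real.log x)) = sqrtMulLogAux := rfl
  rw [hF]
  apply concaveOn_of_deriv2_nonpos (convex_Ici 1)
  · exact Real.continuous_sqrt.comp_continuousOn
      (continuousOn_id.mul (Real.continuousOn_log.mono fun x hx =>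
        ne_of_gt (lt_of_lt_of_le zero_lt_one hx)))
  · rw [interior_Ici]
    intro x hx
    exact (sqrtMulLogAux_hasDerivAt hx).differentiableAt.differentiableWithinAt
  · rw [interior_Ici]
    intro x hx
    have hEq : deriv sqrtMulLogAux =ᶠ[nhds x] sqrtMulLogAux' := by
      filter_upwards [isOpen_Ioi.mem_nhds hx] with y hy
      exact (sqrtMulLogAux_hasDerivAt hy).deriv
    exact (((sqrtMulLogAux'_hasDerivAt hx).differentiableAt).congr_of_eventuallyEq
      hEq).differentiableWithinAt
  · rw [interior_Ici]
    intro x hx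
    have hEq : deriv sqrtMulLogAux =ᶠ[nhds x] sqrtMulLogAux' := by
      filter_upwards [isOpen_Ioi.mem_nhds hx] with y hy
      exact (sqrtMulLogAux_hasDerivAt hy).deriv
    have h1 : deriv^[2] sqrtMulLogAux x = deriv (deriv sqrtMulLogAux) x := by
      simp [Function.iterate_succ, Function.iterate_zero]
    rw [h1, hEq.deriv_eq, (sqrtMulLogAux'_hasDerivAt hx).deriv]
    exact sqrtMulLogAux_deriv2_nonpos hx
end
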